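/- arXiv:1602.00124 — 6 statements merged into one kernel-verified Lean document; each statement's English description precedes it below -/
import Mathlib

section
/- Let σ and τ be probability Radon measures on the interval [0,1], both faithful (i.e. assigning positive measure to every nonempty relatively open subset of [0,1]). If σ is diffuse (i.e. σ({t}) = 0 for every t ∈ [0,1]), then there exists a unique non-decreasing continuous surjection β : [0,1] → [0,1] such that the pushforward measure β_*σ equals τ. -/
open MeasureTheory
open scoped ENNReal

noncomputable section

/-- The unit interval `[0,1]` as a type. -/
abbrev 𝕀 : Type := unitInterval

/-- A measure on `[0,1]` is *faithful* if it assigns positive measure to every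
nonempty (relatively) open subset. -/
def Faithful (μ : Measure 𝕀) : Prop :=
  ∀ U : Set 𝕀, IsOpen U → U.Nonempty → 0 < μ U

/-- A measure on `[0,1]` is *diffuse* (atomless) if every singleton has measure zero. -/
def Diffuse (μ : Measure 𝕀) : Prop :=
  ∀ t : 𝕀, μ {t} = 0

namespace Statement0Aux

open Set Filter Topology

local instance : Fact ((0:ℝ) ≤ 1) := ⟨zero_le_one⟩

/-- The cdf of a probability measure on `𝕀`, valued in `𝕀`. -/
def cdf (μ : Measure 𝕀) [IsProbabilityMeasure μ] : 𝕀 → 𝕀 := fun x =>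
  ⟨(μ (Iic x)).toReal, ENNReal.toReal_nonneg, by
    have h := prob_le_one (μ := μ) (s := Iic x)
    calc (μ (Iic x)).toReal ≤ (1 : ℝ≥0∞).toReal :=
          ENNReal.toReal_mono ENNReal.one_ne_top h
      _ = 1 := by simp⟩

variable {μ : Measure 𝕀} [IsProbabilityMeasure μ]

lemma le_cdf_iff {y : 𝕀} {x : 𝕀} :
    y ≤ cdf μ x ↔ ENNReal.ofReal (y : ℝ) ≤ μ (Iic x) := by
  rw [ENNReal.ofReal_le_iff_le_toReal (measure_ne_top μ _)]
  rfl

lemma cdf_le_iff {y : 𝕀} {x : 𝕀} :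
    cdf μ x ≤ y ↔ μ (Iic x) ≤ ENNReal.ofReal (y : ℝ) := by
  rw [ENNReal.le_ofReal_iff_toReal_le (measure_ne_top μ _) y.2.1]
  rfl

lemma cdf_le_cdf_iff {ν : Measure 𝕀} [IsProbabilityMeasure ν] {x y : 𝕀} :
    cdf μ x ≤ cdf ν y ↔ μ (Iic x) ≤ ν (Iic y) := by
  simp only [cdf, Subtype.mk_le_mk]
  exact ENNReal.toReal_le_toReal (measure_ne_top μ _) (measure_ne_top ν _)

lemma cdf_mono : Monotone (cdf μ) := fun _ _ h =>
  cdf_le_cdf_iff.2 (measure_mono (Iic_subset_Iic.2 h))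

lemma Iic_one : Iic (1 : 𝕀) = univ :=
  eq_univ_of_forall fun z => unitInterval.le_one'

lemma Iic_zero : Iic (0 : 𝕀) = {(0 : 𝕀)} := by
  ext z
  simp only [mem_Iic, mem_singleton_iff]
  exact ⟨fun h => le_antisymm h unitInterval.nonneg', fun h => h.le⟩

lemma cdf_one : cdf μ 1 = 1 := by
  apply Subtype.ext
  simp [cdf, Iic_one]

lemma cdf_zero (hd : Diffuse μ) : cdf μ 0 = 0 := by
  apply Subtype.ext
  simp [cdf, Iic_zero, hd 0]

/-- Strict monotonicity of the measure of `Iic` for a faithful measure. -/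
lemma measure_Iic_lt (hf : Faithful μ) {x y : 𝕀} (h : x < y) :
    μ (Iic x) < μ (Iic y) := by
  obtain ⟨z, hz⟩ := nonempty_Ioo.2 h
  have hpos : 0 < μ (Ioc x y) :=
    lt_of_lt_of_le (hf _ isOpen_Ioo ⟨z, hz⟩) (measure_mono Ioo_subset_Ioc_self)
  have hunion : Iic x ∪ Ioc x y = Iic y := Iic_union_Ioc_eq_Iic h.le
  have h2 : μ (Iic y) = μ (Iic x) + μ (Ioc x y) := by
    rw [← hunion]
    exact measure_union (Set.Iic_disjoint_Ioc le_rfl) measurableSet_Ioc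
  rw [h2]
  exact ENNReal.lt_add_right (measure_ne_top μ _) hpos.ne'

lemma cdf_strictMono (hf : Faithful μ) : StrictMono (cdf μ) := fun x y h => by
  have := measure_Iic_lt hf h
  exact Subtype.mk_lt_mk.2 <|
    (ENNReal.toReal_lt_toReal (measure_ne_top μ _) (measure_ne_top μ _)).2 this

/-- Right-continuity style estimate. -/
lemma le_measure_Iic_of_forall_gt {x : 𝕀} (hx : x ≠ 1) {y : ℝ≥0∞}
    (h : ∀ s, x < s → y ≤ μ (Iic s)) : y ≤ μ (Iic x) := by
  have hx1 : x < 1 := lt_of_le_of_ne unitInterval.le_one' hx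
  obtain ⟨u, hanti, hmem, htends⟩ := exists_seq_strictAnti_tendsto' hx1
  have hInter : ⋂ n, Iic (u n) = Iic x := by
    ext z
    simp only [mem_iInter, mem_Iic]
    constructor
    · intro hz
      exact ge_of_tendsto htends (Eventually.of_forall hz)
    · intro hz n
      exact hz.trans (hmem n).1.le
  have htm := tendsto_measure_iInter_atTop (μ := μ)
    (fun n => measurableSet_Iic.nullMeasurableSet)
    (fun n m hnm => Iic_subset_Iic.2 (hanti.antitone hnm)) ⟨0, measure_ne_top μ _⟩
  rw [hInter] at htm
  exact ge_of_tendsto htm (Eventually.of_forall fun n => h (u n) (hmem n).1)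

/-- Left-continuity style estimate, using diffuseness at the point. -/
lemma measure_Iic_le_of_forall_lt {x : 𝕀} (hx : x ≠ 0) (hd : μ {x} = 0) {y : ℝ≥0∞}
    (h : ∀ s, s < x → μ (Iic s) ≤ y) : μ (Iic x) ≤ y := by
  have hx0 : (0 : 𝕀) < x := lt_of_le_of_ne unitInterval.nonneg' (Ne.symm hx)
  obtain ⟨u, hmono, hmem, htends⟩ := exists_seq_strictMono_tendsto' hx0
  have hUnion : ⋃ n, Iic (u n) = Iio x := by
    ext z
    simp only [mem_iUnion, mem_Iic, mem_Iio]
    constructor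
    · rintro ⟨n, hn⟩
      exact lt_of_le_of_lt hn (hmem n).2
    · intro hz
      obtain ⟨n, hn⟩ := (htends.eventually (eventually_gt_nhds hz)).exists
      exact ⟨n, hn.le⟩
  have h1 : μ (Iic x) ≤ μ (Iio x) := by
    calc μ (Iic x) = μ (Iio x ∪ {x}) := by rw [Iio_union_right]
      _ ≤ μ (Iio x) + μ {x} := measure_union_le _ _
      _ = μ (Iio x) := by rw [hd, add_zero]
  refine h1.trans ?_
  rw [← hUnion]
  have htm := tendsto_measure_iUnion_atTop (μ := μ)
    (fun n m hnm => Iic_subset_Iic.2 (hmono.monotone hnm))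
  exact le_of_tendsto htm (Eventually.of_forall fun n => h (u n) (hmem n).2)

lemma le_cdf_of_forall_gt {x : 𝕀} (hx : x ≠ 1) {y : 𝕀}
    (h : ∀ s, x < s → y ≤ cdf μ s) : y ≤ cdf μ x :=
  le_cdf_iff.2 <| le_measure_Iic_of_forall_gt hx fun s hs => le_cdf_iff.1 (h s hs)

lemma cdf_le_of_forall_lt {x : 𝕀} (hx : x ≠ 0) (hd : μ {x} = 0) {y : 𝕀}
    (h : ∀ s, s < x → cdf μ s ≤ y) : cdf μ x ≤ y :=
  cdf_le_iff.2 <| measure_Iic_le_of_forall_lt hx hd fun s hs => cdf_le_iff.1 (h s hs)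

/-- A diffuse cdf is surjective. -/
lemma cdf_surjective (hd : Diffuse μ) : Function.Surjective (cdf μ) := by
  intro y
  set S : Set 𝕀 := {s | y ≤ cdf μ s} with hS
  have h1S : (1 : 𝕀) ∈ S := by
    rw [hS, mem_setOf_eq, cdf_one]
    exact unitInterval.le_one'
  refine ⟨sInf S, le_antisymm ?_ ?_⟩
  · by_cases hx : sInf S = 0
    · rw [hx, cdf_zero hd]
      exact unitInterval.nonneg'
    · refine cdf_le_of_forall_lt hx (hd _) fun s hs => ?_
      by_contra hc
      push_neg at hc
      exact absurd (sInf_le (show s ∈ S from le_of_lt hc)) (not_le.2 hs)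
  · by_cases hx : sInf S = 1
    · rw [hx, cdf_one]
      exact unitInterval.le_one'
    · refine le_cdf_of_forall_gt hx fun s hs => ?_
      obtain ⟨a, haS, has⟩ := sInf_lt_iff.1 hs
      exact haS.trans (cdf_mono has.le)

/-- The generalized inverse ("quantile function") of the cdf of `μ`. -/
def quant (μ : Measure 𝕀) [IsProbabilityMeasure μ] : 𝕀 → 𝕀 := fun y =>
  sInf {s | y ≤ cdf μ s}

lemma quant_le_iff {y t : 𝕀} : quant μ y ≤ t ↔ y ≤ cdf μ t := by
  constructor
  · intro h
    by_cases ht : t = 1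
    · rw [ht, cdf_one]; exact unitInterval.le_one'
    · refine le_cdf_of_forall_gt ht fun s hs => ?_
      obtain ⟨a, haS, has⟩ := sInf_lt_iff.1 (lt_of_le_of_lt h hs)
      exact haS.trans (cdf_mono has.le)
  · intro h
    exact sInf_le h

lemma quant_mono : Monotone (quant μ) := fun y1 y2 h =>
  sInf_le_sInf fun s hs => h.trans hs

lemma quant_cdf (hf : Faithful μ) (s : 𝕀) : quant μ (cdf μ s) = s := by
  refine le_antisymm (sInf_le (show cdf μ s ≤ cdf μ s from le_rfl)) (le_sInf fun u hu => ?_)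
  exact ((cdf_strictMono hf).le_iff_le).1 hu

lemma quant_surjective (hf : Faithful μ) : Function.Surjective (quant μ) :=
  fun s => ⟨cdf μ s, quant_cdf hf s⟩

end Statement0Aux

open Statement0Aux Set

/-- If σ and τ are faithful probability Radon measures on [0,1] and σ is
diffuse, then there is a unique non-decreasing continuous surjection β : [0,1] → [0,1]
with β_*σ = τ. -/
theorem statement0 (σ τ : Measure 𝕀) [IsProbabilityMeasure σ] [IsProbabilityMeasure τ]
    [σ.Regular] [τ.Regular] (hσf : Faithful σ) (hτf : Faithful τ) (hσd : Diffuse σ) :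
    ∃! β : 𝕀 → 𝕀,
      (Monotone β ∧ Continuous β ∧ Function.Surjective β) ∧ Measure.map β σ = τ := by
  classical
  set f : 𝕀 → 𝕀 := cdf σ with hf
  set G : 𝕀 → 𝕀 := quant τ with hG
  have hfsurj : Function.Surjective f := cdf_surjective hσd
  have hfmono : Monotone f := cdf_mono
  have hfstrict : StrictMono f := cdf_strictMono hσf
  have hfcont : Continuous f := hfmono.continuous_of_surjective hfsurj
  have hGmono : Monotone G := quant_mono
  have hGsurj : Function.Surjective G := quant_surjective hτf
  have hGcont : Continuous G := hGmono.continuous_of_surjective hGsurj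
  set β : 𝕀 → 𝕀 := G ∘ f with hβ
  have hβmono : Monotone β := hGmono.comp hfmono
  have hβcont : Continuous β := hGcont.comp hfcont
  have hβsurj : Function.Surjective β := hGsurj.comp hfsurj
  have hβmeas : Measurable β := hβcont.measurable
  have hmap : Measure.map β σ = τ := by
    refine Measure.ext_of_Iic _ _ fun t => ?_
    rw [Measure.map_apply hβmeas measurableSet_Iic]
    obtain ⟨xt, hxt⟩ := hfsurj (cdf τ t)
    have hpre : β ⁻¹' Iic t = Iic xt := by
      ext z
      simp only [mem_preimage, mem_Iic, hβ, Function.comp_apply]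
      rw [quant_le_iff, ← hxt, hfstrict.le_iff_le]
    rw [hpre]
    have := congrArg Subtype.val hxt
    simpa [hf, cdf, ENNReal.toReal_eq_toReal_iff' (measure_ne_top σ _) (measure_ne_top τ _)]
      using this
  refine ⟨β, ⟨⟨hβmono, hβcont, hβsurj⟩, hmap⟩, ?_⟩
  rintro β' ⟨⟨hmono', hcont', hsurj'⟩, hmap'⟩
  funext x
  have hmeas' : Measurable β' := hcont'.measurable
  -- first inequality : f x ≤ cdf τ (β' x)
  have h1 : f x ≤ cdf τ (β' x) := by
    rw [hf, cdf_le_cdf_iff]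
    rw [← hmap', Measure.map_apply hmeas' measurableSet_Iic]
    exact measure_mono fun z hz => hmono' hz
  have hle : β x ≤ β' x := quant_le_iff.2 h1
  refine le_antisymm ?_ hle
  by_contra hlt
  push_neg at hlt
  obtain ⟨s, h1s, h2s⟩ := exists_between hlt
  have ht : f x ≤ cdf τ (β x) := quant_le_iff.1 le_rfl
  have hsub : β' ⁻¹' Iic s ⊆ Iio x := by
    intro z hz
    simp only [mem_preimage, mem_Iic] at hz
    simp only [mem_Iio]
    by_contra hzx
    push_neg at hzx
    exact absurd (le_trans (hmono' hzx) hz) (not_le.2 h2s)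
  have hchain1 : τ (Iic s) ≤ σ (Iic x) := by
    rw [← hmap', Measure.map_apply hmeas' measurableSet_Iic]
    exact measure_mono (hsub.trans Iio_subset_Iic_self)
  have hchain2 : σ (Iic x) ≤ τ (Iic (β x)) := cdf_le_cdf_iff.1 ht
  have hchain3 : τ (Iic (β x)) < τ (Iic s) := measure_Iic_lt hτf h1s
  exact absurd ((hchain1.trans hchain2).trans_lt hchain3) (lt_irrefl _)
end
end

section
/- Let σ and τ be faithful probability Radon measures on [0,1] with σ diffuse, and let β : [0,1] → [0,1] be the (unique) non-decreasing continuous surjection with β_*σ = τ. Then τ is diffuse if and only if β is a homeomorphism of [0,1] onto itself. -/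
open MeasureTheory
open scoped ENNReal

noncomputable section

/-- With σ, τ faithful probability Radon measures, σ diffuse, and β the
non-decreasing continuous surjection pushing σ forward to τ: τ is diffuse iff β is a
homeomorphism of [0,1] onto itself. -/
theorem statement1 (σ τ : Measure 𝕀) [IsProbabilityMeasure σ] [IsProbabilityMeasure τ]
    [σ.Regular] [τ.Regular] (hσf : Faithful σ) (hτf : Faithful τ) (hσd : Diffuse σ)
    (β : 𝕀 → 𝕀) (hmono : Monotone β) (hcont : Continuous β)
    (hsurj : Function.Surjective β) (hpush : Measure.map β σ = τ) :
    Diffuse τ ↔ ∃ h : 𝕀 ≃ₜ 𝕀, ⇑h = β := by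

  have hmeas : Measurable β := hcont.measurable
  constructor
  · intro hτd
    have hinj : Function.Injective β := by
      intro a b hab
      by_contra hne
      wlog hlt : a < b generalizing a b
      · exact this hab.symm (Ne.symm hne) (lt_of_le_of_ne (not_lt.mp hlt) (Ne.symm hne))
      have hpre : Set.Ioo a b ⊆ β ⁻¹' {β a} := by
        intro x hx
        have h1 : β a ≤ β x := hmono hx.1.le
        have h2 : β x ≤ β b := hmono hx.2.le
        simp only [Set.mem_preimage, Set.mem_singleton_iff]
        exact le_antisymm (hab ▸ h2) h1
      have hpos : 0 < σ (Set.Ioo a b) := by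
        refine hσf _ isOpen_Ioo ?_
        obtain ⟨c, hc⟩ := exists_between hlt
        exact ⟨c, hc⟩
      have : 0 < τ {β a} := by
        rw [← hpush, Measure.map_apply hmeas (measurableSet_singleton _)]
        exact lt_of_lt_of_le hpos (measure_mono hpre)
      exact absurd (hτd (β a)) this.ne'
    exact ⟨(Continuous.homeoOfEquivCompactToT2 (f := Equiv.ofBijective β ⟨hinj, hsurj⟩)
      hcont), rfl⟩
  · rintro ⟨h, rfl⟩ t
    rw [← hpush, Measure.map_apply hmeas (measurableSet_singleton _)]
    have : (⇑h) ⁻¹' {t} = {h.symm t} := by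
      ext x
      simp only [Set.mem_preimage, Set.mem_singleton_iff]
      constructor
      · intro hx; exact (Homeomorph.symm_apply_apply h x) ▸ congrArg h.symm hx
      · rintro rfl; simp
    rw [this]
    exact hσd _
end
end

section
/- Let n ≥ 1, let τ be a faithful probability Radon measure on [0,1], and let σ be a faithful diffuse probability Radon measure on [0,1]. Then there exists an injective unital *-homomorphism φ : A_n → A_n such that ∫ tr(φ(f)(t)) dσ(t) = ∫ tr(f(t)) dτ(t) for all f ∈ A_n. -/
/-! The distribution function `F_σ x = σ [0, x]` of the diffuse measure σ is a continuous
surjection of `[0,1]` pushing σ forward to Lebesgue measure. The quantile function of τ, the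
lower Galois adjoint of `F_τ`, pushes Lebesgue measure forward to τ; as τ is faithful, `F_τ` is
strictly increasing, so the quantile function is a monotone surjection, hence continuous. The
composite `g` is thus a continuous surjection with `g_* σ = τ`, and `f ↦ f ∘ g` is the required
morphism: it is injective because `g` is onto, and the trace identity is the change of
variables along `g`. -/

open MeasureTheory
open scoped ENNReal

noncomputable section

open scoped Matrix.Norms.L2Operator ComplexOrder

/-- `n × n` complex matrices. -/
abbrev Mat (n : ℕ) : Type := Matrix (Fin n) (Fin n) ℂ

/-- The C*-algebra `𝔸 n = C([0,1], Mₙ(ℂ))` of continuous matrix-valued functions. -/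
abbrev 𝔸 (n : ℕ) : Type := C(𝕀, Mat n)

/-- The tracial state on `𝔸 n` induced by the measure `μ` on `[0,1]`:
`f ↦ ∫ tr(f t) dμ(t)`, where `tr` is the normalized trace on `Mₙ(ℂ)`. -/
def trInt (n : ℕ) (μ : Measure 𝕀) (f : 𝔸 n) : ℂ :=
  ∫ t, (f t).trace / (n : ℂ) ∂μ

namespace ProbabilityTheory

theorem continuous_cdf (ν : Measure ℝ) [IsProbabilityMeasure ν] [NullSingletonClass ν] :
    Continuous (cdf ν) := by
  refine continuous_iff_continuousAt.2 fun a ↦ ?_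
  have hleft : Function.leftLim (cdf ν) a = cdf ν a := by
    have h := (cdf ν).measure_singleton a
    rw [measure_cdf, measure_singleton, eq_comm, ENNReal.ofReal_eq_zero, sub_nonpos] at h
    exact le_antisymm ((monotone_cdf ν).leftLim_le le_rfl) h
  rw [(monotone_cdf ν).continuousAt_iff_leftLim_eq_rightLim, hleft, (cdf ν).rightLim_eq]

end ProbabilityTheory

namespace unitInterval

open Set Topology

variable (μ : Measure 𝕀) [IsProbabilityMeasure μ]

def cdf (x : 𝕀) : 𝕀 := ⟨μ.real (Iic x), measureReal_nonneg, measureReal_le_one⟩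

lemma coe_comp_cdf :
    Subtype.val ∘ cdf μ = ProbabilityTheory.cdf (μ.map (↑)) ∘ Subtype.val := by
  ext x
  rw [Function.comp_apply, Function.comp_apply, ProbabilityTheory.unitInterval.cdf_eq_real]
  exact congrArg μ.real Icc_bot.symm

lemma ofReal_cdf (x : 𝕀) : ENNReal.ofReal (cdf μ x) = μ (Iic x) :=
  ofReal_measureReal (measure_ne_top μ _)

lemma monotone_cdf : Monotone (cdf μ) :=
  fun _ _ hxy ↦ measureReal_mono (Iic_subset_Iic.2 hxy)

lemma cdf_one : cdf μ 1 = 1 :=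
  Subtype.ext <| (congrArg μ.real (Iic_top (α := 𝕀))).trans probReal_univ

lemma cdf_zero (hμ : Diffuse μ) : cdf μ 0 = 0 :=
  Subtype.ext <| (congrArg μ.real (Iic_bot (α := 𝕀))).trans (by simp [measureReal_def, hμ ⊥])

lemma continuousWithinAt_cdf_Ici (x : 𝕀) : ContinuousWithinAt (cdf μ) (Ici x) x := by
  rw [IsInducing.subtypeVal.continuousWithinAt_iff, coe_comp_cdf]
  exact ((ProbabilityTheory.cdf _).right_continuous x).comp
    continuous_subtype_val.continuousWithinAt fun _ h ↦ h

lemma continuous_cdf (hμ : Diffuse μ) : Continuous (cdf μ) := by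
  have : NullSingletonClass μ := ⟨hμ⟩
  have : IsProbabilityMeasure (μ.map ((↑) : 𝕀 → ℝ)) :=
    Measure.isProbabilityMeasure_map measurable_subtype_coe.aemeasurable
  have : NullSingletonClass (μ.map ((↑) : 𝕀 → ℝ)) := by
    refine ⟨fun a ↦ ?_⟩
    rw [Measure.map_apply measurable_subtype_coe (measurableSet_singleton a)]
    exact (subsingleton_singleton.preimage Subtype.val_injective).measure_zero μ
  rw [IsInducing.subtypeVal.continuous_iff, coe_comp_cdf]
  exact (ProbabilityTheory.continuous_cdf _).comp continuous_subtype_val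

lemma cdf_strictMono (hμ : Faithful μ) : StrictMono (cdf μ) := by
  intro x y hxy
  have hIoo : 0 < μ (Ioo x y) := hμ _ isOpen_Ioo (nonempty_Ioo.2 hxy)
  have hIoc : 0 < μ.real (Ioc x y) :=
    ENNReal.toReal_pos (hIoo.trans_le (measure_mono Ioo_subset_Ioc_self)).ne' (measure_ne_top _ _)
  show μ.real (Iic x) < μ.real (Iic y)
  rw [← Iic_union_Ioc_eq_Iic hxy.le, measureReal_union (Iic_disjoint_Ioc le_rfl) measurableSet_Ioc]
  linarith

lemma surjective_cdf (hμ : Diffuse μ) : Function.Surjective (cdf μ) := fun c ↦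
  intermediate_value_univ 0 1 (continuous_cdf μ hμ) (by rw [cdf_zero μ hμ, cdf_one]; exact c.2)

lemma exists_preimage_cdf_Iic (hμ : Diffuse μ) (c : 𝕀) :
    ∃ x, cdf μ x = c ∧ cdf μ ⁻¹' Iic c = Iic x := by
  have hclosed : IsClosed (cdf μ ⁻¹' {c}) := isClosed_singleton.preimage (continuous_cdf μ hμ)
  have hne : (cdf μ ⁻¹' {c}).Nonempty := surjective_cdf μ hμ c
  have hx : sSup (cdf μ ⁻¹' {c}) ∈ cdf μ ⁻¹' {c} := hclosed.sSup_mem hne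
  refine ⟨_, hx, Set.ext fun y ↦ ⟨fun hy ↦ ?_, fun hy ↦ (monotone_cdf μ hy).trans_eq hx⟩⟩
  by_contra hlt
  have hc : cdf μ y = c :=
    le_antisymm hy (hx.symm.le.trans (monotone_cdf μ (not_le.1 hlt).le))
  exact hlt (le_sSup (show y ∈ cdf μ ⁻¹' {c} from hc))

theorem map_cdf (hμ : Diffuse μ) : μ.map (cdf μ) = volume := by
  have hmeas : Measurable (cdf μ) := (continuous_cdf μ hμ).measurable
  refine Measure.ext_of_Iic _ _ fun c ↦ ?_
  obtain ⟨x, hxc, hpre⟩ := exists_preimage_cdf_Iic μ hμ c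
  rw [Measure.map_apply hmeas measurableSet_Iic, hpre, volume_Iic, ← hxc, ofReal_cdf]

def quantile (u : 𝕀) : 𝕀 := sInf {t | u ≤ cdf μ t}

lemma le_cdf_quantile (u : 𝕀) : u ≤ cdf μ (quantile μ u) := by
  set S := {t | u ≤ cdf μ t}
  have hne : S.Nonempty := ⟨1, show u ≤ cdf μ 1 by rw [cdf_one]; exact le_top⟩
  have hcont : ContinuousWithinAt (cdf μ) S (sInf S) :=
    (continuousWithinAt_cdf_Ici μ _).mono fun _ ↦ sInf_le
  have hmem : cdf μ (sInf S) ∈ Ici u :=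
    closure_minimal (image_subset_iff.2 fun _ h ↦ h) isClosed_Ici
      (hcont.mem_closure_image (sInf_mem_closure hne))
  exact hmem

theorem gc_quantile_cdf : GaloisConnection (quantile μ) (cdf μ) := fun _ _ ↦
  ⟨fun h ↦ (le_cdf_quantile μ _).trans (monotone_cdf μ h), fun h ↦ sInf_le h⟩

theorem map_quantile_volume : volume.map (quantile μ) = μ := by
  have hmeas : Measurable (quantile μ) := (gc_quantile_cdf μ).monotone_l.measurable
  refine Measure.ext_of_Iic _ _ fun t ↦ ?_
  have hpre : quantile μ ⁻¹' Iic t = Iic (cdf μ t) := Set.ext fun _ ↦ gc_quantile_cdf μ _ _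
  rw [Measure.map_apply hmeas measurableSet_Iic, hpre, volume_Iic, ofReal_cdf]

lemma quantile_cdf (hμ : Faithful μ) (t : 𝕀) : quantile μ (cdf μ t) = t :=
  le_antisymm ((gc_quantile_cdf μ).l_u_le t)
    (le_sInf fun _ hs ↦ (cdf_strictMono μ hμ).le_iff_le.1 hs)

lemma surjective_quantile (hμ : Faithful μ) : Function.Surjective (quantile μ) :=
  fun t ↦ ⟨_, quantile_cdf μ hμ t⟩

lemma continuous_quantile (hμ : Faithful μ) : Continuous (quantile μ) :=
  (gc_quantile_cdf μ).monotone_l.continuous_of_surjective (surjective_quantile μ hμ)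

end unitInterval

theorem exists_continuous_surjective_map_eq {τ σ : Measure 𝕀} [IsProbabilityMeasure τ]
    [IsProbabilityMeasure σ] (hτ : Faithful τ) (hσ : Diffuse σ) :
    ∃ g : C(𝕀, 𝕀), Function.Surjective g ∧ σ.map g = τ := by
  have hF := unitInterval.continuous_cdf σ hσ
  have hQ := unitInterval.continuous_quantile τ hτ
  refine ⟨⟨_, hQ.comp hF⟩, (unitInterval.surjective_quantile τ hτ).comp
    (unitInterval.surjective_cdf σ hσ), ?_⟩
  rw [ContinuousMap.coe_mk, ← Measure.map_map hQ.measurable hF.measurable,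
    unitInterval.map_cdf σ hσ, unitInterval.map_quantile_volume]

theorem ContinuousMap.compStarAlgHom'_injective (𝕜 : Type*) {X Y A : Type*} [CommSemiring 𝕜]
    [TopologicalSpace X] [TopologicalSpace Y] [TopologicalSpace A] [Semiring A]
    [IsTopologicalSemiring A] [Star A] [ContinuousStar A] [Algebra 𝕜 A] {g : C(X, Y)}
    (hg : Function.Surjective g) : Function.Injective (compStarAlgHom' 𝕜 A g) :=
  fun _ _ h ↦ (cancel_right hg).1 h

lemma trInt_compStarAlgHom' (n : ℕ) (μ : Measure 𝕀) (g : C(𝕀, 𝕀)) (f : 𝔸 n) :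
    trInt n μ (ContinuousMap.compStarAlgHom' ℂ (Mat n) g f) = trInt n (μ.map g) f :=
  (integral_map g.continuous.aemeasurable
    (f.continuous.matrix_trace.div_const _).aestronglyMeasurable).symm

theorem statement3_general (n : ℕ) (τ σ : Measure 𝕀)
    [IsProbabilityMeasure τ] [IsProbabilityMeasure σ]
    (hτf : Faithful τ) (hσd : Diffuse σ) :
    ∃ φ : 𝔸 n →⋆ₐ[ℂ] 𝔸 n, Function.Injective φ ∧
      ∀ f : 𝔸 n, trInt n σ (φ f) = trInt n τ f := by
  obtain ⟨g, hg_surj, hg_map⟩ := exists_continuous_surjective_map_eq hτf hσd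
  exact ⟨ContinuousMap.compStarAlgHom' ℂ (Mat n) g,
    ContinuousMap.compStarAlgHom'_injective ℂ hg_surj,
    fun f ↦ by rw [trInt_compStarAlgHom', hg_map]⟩

/-- For a faithful measure τ and a faithful diffuse measure σ on [0,1],
there is a morphism (injective unital *-homomorphism carrying the trace of σ back to the
trace of τ) from ⟨𝔸 n, τ⟩ into ⟨𝔸 n, σ⟩. -/
theorem statement3 (n : ℕ) (hn : 1 ≤ n) (τ σ : Measure 𝕀)
    [IsProbabilityMeasure τ] [IsProbabilityMeasure σ] [τ.Regular] [σ.Regular]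
    (hτf : Faithful τ) (hσf : Faithful σ) (hσd : Diffuse σ) :
    ∃ φ : 𝔸 n →⋆ₐ[ℂ] 𝔸 n, Function.Injective φ ∧
      ∀ f : 𝔸 n, trInt n σ (φ f) = trInt n τ f :=
  statement3_general n τ σ hτf hσd
end
end

section
/- Let τ₀ be a faithful probability Radon measure on [0,1], let τ₂ be a probability Radon measure on [0,1], let δ > 0, and let k ≥ 1. For i = 1, 2 let ξ^i = (ξ^i_1, …, ξ^i_k) be tuples of continuous maps [0,1] → [0,1] such that ξ^i_1 ≤ ξ^i_2 ≤ ⋯ ≤ ξ^i_k pointwise, each ξ^i_j has image of diameter less than δ/3, and (1/k)·Σ_j (ξ^i_j)_*τ₂ = τ₀. Then sup_{t ∈ [0,1]} |ξ^1_j(t) − ξ^2_j(t)| < δ for every j = 1, …, k. -/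
open MeasureTheory
open scoped ENNReal

noncomputable section

lemma statement9_half (τ₂ : Measure 𝕀) [IsProbabilityMeasure τ₂]
    (τ₀ : Measure 𝕀)
    (δ : ℝ) (hδ : 0 < δ) (k : ℕ)
    (ξ₁ ξ₂ : Fin k → C(𝕀, 𝕀))
    (hmono₁ : ∀ i j : Fin k, i ≤ j → ∀ t : 𝕀, ξ₁ i t ≤ ξ₁ j t)
    (hmono₂ : ∀ i j : Fin k, i ≤ j → ∀ t : 𝕀, ξ₂ i t ≤ ξ₂ j t)
    (hdiam₁ : ∀ j : Fin k, Metric.diam (Set.range (ξ₁ j)) < δ / 3)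
    (hdiam₂ : ∀ j : Fin k, Metric.diam (Set.range (ξ₂ j)) < δ / 3)
    (hpush₁ : (k : ℝ≥0∞)⁻¹ • ∑ j : Fin k, Measure.map (ξ₁ j) τ₂ = τ₀)
    (hpush₂ : (k : ℝ≥0∞)⁻¹ • ∑ j : Fin k, Measure.map (ξ₂ j) τ₂ = τ₀)
    (j : Fin k) (t : 𝕀) : (ξ₁ j t : ℝ) - (ξ₂ j t : ℝ) < δ := by
  by_contra hcon
  push_neg at hcon
  set a : ℝ := (ξ₁ j t : ℝ) with ha
  set S : Set 𝕀 := {x : 𝕀 | a - δ / 2 < (x : ℝ)} with hSdef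
  have hSopen : IsOpen S := isOpen_Ioi.preimage continuous_subtype_val
  have hS : MeasurableSet S := hSopen.measurableSet
  have hdist₁ : ∀ s : 𝕀, a - δ / 3 < (ξ₁ j s : ℝ) := by
    intro s
    have hb : Bornology.IsBounded (Set.range (ξ₁ j)) :=
      (isCompact_range (ξ₁ j).continuous).isBounded
    have hle := Metric.dist_le_diam_of_mem hb (Set.mem_range_self s) (Set.mem_range_self t)
    rw [Subtype.dist_eq, Real.dist_eq] at hle
    have habs : |(ξ₁ j s : ℝ) - (ξ₁ j t : ℝ)| < δ / 3 := lt_of_le_of_lt hle (hdiam₁ j)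
    have := abs_lt.mp habs
    linarith [this.1, this.2]
  have hdist₂ : ∀ s : 𝕀, (ξ₂ j s : ℝ) < (ξ₂ j t : ℝ) + δ / 3 := by
    intro s
    have hb : Bornology.IsBounded (Set.range (ξ₂ j)) :=
      (isCompact_range (ξ₂ j).continuous).isBounded
    have hle := Metric.dist_le_diam_of_mem hb (Set.mem_range_self s) (Set.mem_range_self t)
    rw [Subtype.dist_eq, Real.dist_eq] at hle
    have habs : |(ξ₂ j s : ℝ) - (ξ₂ j t : ℝ)| < δ / 3 := lt_of_le_of_lt hle (hdiam₂ j)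
    have := abs_lt.mp habs
    linarith [this.1, this.2]
  have hmemS : ∀ i : Fin k, j ≤ i → ∀ s : 𝕀, ξ₁ i s ∈ S := by
    intro i hji s
    have h1 : (ξ₁ j s : ℝ) ≤ (ξ₁ i s : ℝ) := Subtype.coe_le_coe.mpr (hmono₁ j i hji s)
    have h2 := hdist₁ s
    show a - δ / 2 < (ξ₁ i s : ℝ)
    linarith
  have hnotS : ∀ i : Fin k, i ≤ j → ∀ s : 𝕀, ξ₂ i s ∉ S := by
    intro i hij s hmem
    have h1 : (ξ₂ i s : ℝ) ≤ (ξ₂ j s : ℝ) := Subtype.coe_le_coe.mpr (hmono₂ i j hij s)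
    have h2 := hdist₂ s
    have h3 : a - δ / 2 < (ξ₂ i s : ℝ) := hmem
    linarith
  have hm₁ : τ₀ S = (k : ℝ≥0∞)⁻¹ * ∑ i : Fin k, τ₂ ((ξ₁ i) ⁻¹' S) := by
    rw [← hpush₁, Measure.smul_apply, smul_eq_mul, Measure.finset_sum_apply]
    congr 1
    exact Finset.sum_congr rfl fun i _ => Measure.map_apply (ξ₁ i).continuous.measurable hS
  have hm₂ : τ₀ S = (k : ℝ≥0∞)⁻¹ * ∑ i : Fin k, τ₂ ((ξ₂ i) ⁻¹' S) := by
    rw [← hpush₂, Measure.smul_apply, smul_eq_mul, Measure.finset_sum_apply]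
    congr 1
    exact Finset.sum_congr rfl fun i _ => Measure.map_apply (ξ₂ i).continuous.measurable hS
  have hlow : ((k - j.val : ℕ) : ℝ≥0∞) ≤ ∑ i : Fin k, τ₂ ((ξ₁ i) ⁻¹' S) := by
    calc ((k - j.val : ℕ) : ℝ≥0∞) = ∑ _i ∈ Finset.Ici j, (1 : ℝ≥0∞) := by
          rw [Finset.sum_const, Fin.card_Ici, nsmul_eq_mul, mul_one]
      _ ≤ ∑ i ∈ Finset.Ici j, τ₂ ((ξ₁ i) ⁻¹' S) := by
          refine Finset.sum_le_sum fun i hi => ?_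
          have hpre : (ξ₁ i) ⁻¹' S = Set.univ :=
            Set.eq_univ_of_forall fun s => hmemS i (Finset.mem_Ici.mp hi) s
          rw [hpre, measure_univ]
      _ ≤ ∑ i : Fin k, τ₂ ((ξ₁ i) ⁻¹' S) :=
          Finset.sum_le_sum_of_subset (Finset.subset_univ _)
  have hup : ∑ i : Fin k, τ₂ ((ξ₂ i) ⁻¹' S) ≤ ((k - (j.val + 1) : ℕ) : ℝ≥0∞) := by
    have hsplit := Finset.sum_add_sum_compl (Finset.Iic j) (fun i => τ₂ ((ξ₂ i) ⁻¹' S))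
    have hzero : ∑ i ∈ Finset.Iic j, τ₂ ((ξ₂ i) ⁻¹' S) = 0 := by
      refine Finset.sum_eq_zero fun i hi => ?_
      have hpre : (ξ₂ i) ⁻¹' S = ∅ :=
        Set.eq_empty_of_forall_notMem fun s hs => hnotS i (Finset.mem_Iic.mp hi) s hs
      rw [hpre, measure_empty]
    have hbound : ∑ i ∈ (Finset.Iic j)ᶜ, τ₂ ((ξ₂ i) ⁻¹' S)
        ≤ ((k - (j.val + 1) : ℕ) : ℝ≥0∞) := by
      calc ∑ i ∈ (Finset.Iic j)ᶜ, τ₂ ((ξ₂ i) ⁻¹' S)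
          ≤ ∑ _i ∈ (Finset.Iic j)ᶜ, (1 : ℝ≥0∞) :=
            Finset.sum_le_sum fun i _ => prob_le_one
        _ = ((k - (j.val + 1) : ℕ) : ℝ≥0∞) := by
            rw [Finset.sum_const, nsmul_eq_mul, mul_one, Finset.card_compl, Fin.card_Iic]
            simp [Fintype.card_fin]
    calc ∑ i : Fin k, τ₂ ((ξ₂ i) ⁻¹' S)
        = ∑ i ∈ Finset.Iic j, τ₂ ((ξ₂ i) ⁻¹' S)
          + ∑ i ∈ (Finset.Iic j)ᶜ, τ₂ ((ξ₂ i) ⁻¹' S) := hsplit.symm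
      _ = ∑ i ∈ (Finset.Iic j)ᶜ, τ₂ ((ξ₂ i) ⁻¹' S) := by rw [hzero, zero_add]
      _ ≤ _ := hbound
  have hkpos : 0 < k := j.pos
  have hk0 : ((k : ℝ≥0∞))⁻¹ ≠ 0 := by
    simp [ENNReal.inv_ne_zero]
  have hktop : ((k : ℝ≥0∞))⁻¹ ≠ ⊤ := by
    simp [ENNReal.inv_ne_top, hkpos.ne']
  have hchain : (k : ℝ≥0∞)⁻¹ * ((k - j.val : ℕ) : ℝ≥0∞)
      ≤ (k : ℝ≥0∞)⁻¹ * ((k - (j.val + 1) : ℕ) : ℝ≥0∞) := by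
    calc (k : ℝ≥0∞)⁻¹ * ((k - j.val : ℕ) : ℝ≥0∞)
        ≤ τ₀ S := by rw [hm₁]; exact mul_le_mul_right hlow _
      _ ≤ (k : ℝ≥0∞)⁻¹ * ((k - (j.val + 1) : ℕ) : ℝ≥0∞) := by
          rw [hm₂]; exact mul_le_mul_right hup _
  have hnat : ((k - j.val : ℕ) : ℝ≥0∞) ≤ ((k - (j.val + 1) : ℕ) : ℝ≥0∞) :=
    (ENNReal.mul_le_mul_iff_right hk0 hktop).mp hchain
  have : (k - j.val : ℕ) ≤ (k - (j.val + 1) : ℕ) := Nat.cast_le.mp hnat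
  have hjk : j.val < k := j.isLt
  omega

/-- The key comparison claim: two pointwise non-decreasing families of
continuous self-maps of `[0,1]`, whose members have images of diameter less than δ/3 and
which both push `τ₂` (averaged) onto the faithful measure `τ₀`, are uniformly δ-close. -/
theorem statement9 (τ₀ τ₂ : Measure 𝕀) [IsProbabilityMeasure τ₀] [IsProbabilityMeasure τ₂]
    [τ₀.Regular] [τ₂.Regular] (hτ₀ : Faithful τ₀)
    (δ : ℝ) (hδ : 0 < δ) (k : ℕ) (hk : 1 ≤ k)
    (ξ₁ ξ₂ : Fin k → C(𝕀, 𝕀))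
    (hmono₁ : ∀ i j : Fin k, i ≤ j → ∀ t : 𝕀, ξ₁ i t ≤ ξ₁ j t)
    (hmono₂ : ∀ i j : Fin k, i ≤ j → ∀ t : 𝕀, ξ₂ i t ≤ ξ₂ j t)
    (hdiam₁ : ∀ j : Fin k, Metric.diam (Set.range (ξ₁ j)) < δ / 3)
    (hdiam₂ : ∀ j : Fin k, Metric.diam (Set.range (ξ₂ j)) < δ / 3)
    (hpush₁ : (k : ℝ≥0∞)⁻¹ • ∑ j : Fin k, Measure.map (ξ₁ j) τ₂ = τ₀)
    (hpush₂ : (k : ℝ≥0∞)⁻¹ • ∑ j : Fin k, Measure.map (ξ₂ j) τ₂ = τ₀) :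
    ∀ (j : Fin k) (t : 𝕀), |(ξ₁ j t : ℝ) - (ξ₂ j t : ℝ)| < δ := by
  intro j t
  rw [abs_sub_lt_iff]
  exact ⟨statement9_half τ₂ τ₀ δ hδ k ξ₁ ξ₂ hmono₁ hmono₂ hdiam₁ hdiam₂ hpush₁ hpush₂ j t,
    statement9_half τ₂ τ₀ δ hδ k ξ₂ ξ₁ hmono₂ hmono₁ hdiam₂ hdiam₁ hpush₂ hpush₁ j t⟩
end
end

section
/- Let p, q, p', q', k ≥ 1 with kpq = p'q', let ξ₁, …, ξ_k : [0,1] → [0,1] be continuous, and let φ : Z_{p,q} → A_{p'q'} be the *-homomorphism φ(f) = diag(f∘ξ₁, …, f∘ξ_k). Then the following are equivalent: (i) there exists a unitary u ∈ A_{p'q'} such that the image of u φ(·) u* is contained in Z_{p',q'}; (ii) the congruences q·n₀⁰ ≡ p·n₀¹ ≡ 0 (mod q'), q·n₁⁰ ≡ p·n₁¹ ≡ 0 (mod p'), n₀ᵗ ≡ 0 (mod q') and n₁ᵗ ≡ 0 (mod p') for every t ∈ (0,1) hold, where n_sᵗ denotes the number of indices i with ξᵢ(s) = t. -/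
open MeasureTheory
open scoped ENNReal

noncomputable section

open scoped Matrix.Norms.L2Operator ComplexOrder

/-- Block diagonal (with `k` blocks of size `n`) as a linear map, reindexed to `Fin m`
where `m = n * k`. -/
def diagL (n k m : ℕ) (h : n * k = m) : (Fin k → Mat n) →ₗ[ℂ] Mat m where
  toFun g := (Matrix.blockDiagonal g).submatrix
      (fun a => finProdFinEquiv.symm (Fin.cast h.symm a))
      (fun a => finProdFinEquiv.symm (Fin.cast h.symm a))
  map_add' g₁ g₂ := by
    simp [Matrix.blockDiagonal_add, Matrix.submatrix_add]
  map_smul' c g := by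
    simp [Matrix.blockDiagonal_smul, Matrix.submatrix_smul]

/-- `diag n k m h ξ f` is the element of `𝔸 m` whose value at `t` is the block-diagonal
matrix with diagonal blocks `f (ξ 0 t), …, f (ξ (k-1) t)`. -/
def diag (n k m : ℕ) (h : n * k = m) (ξ : Fin k → C(𝕀, 𝕀)) (f : 𝔸 n) : 𝔸 m where
  toFun t := diagL n k m h (fun j => f (ξ j t))
  continuous_toFun := (diagL n k m h).continuous_of_finiteDimensional.comp
      (continuous_pi fun j => f.continuous.comp (ξ j).continuous)

open scoped Kronecker

/-- Evaluation at a point, as a star algebra homomorphism `𝔸 n →⋆ₐ[ℂ] Mat n`. -/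
def evalHom (n : ℕ) (t : 𝕀) : 𝔸 n →⋆ₐ[ℂ] Mat n :=
  { toFun := fun f => f t
    map_one' := rfl
    map_mul' := fun _ _ => rfl
    map_zero' := rfl
    map_add' := fun _ _ => rfl
    commutes' := fun _ => rfl
    map_star' := fun _ => rfl }

/-- `a ↦ a ⊗ 1`, with indices identified via `finProdFinEquiv : Fin p × Fin q ≃ Fin (p*q)`. -/
def lKronFun (p q : ℕ) (a : Mat p) : Mat (p * q) :=
  (a ⊗ₖ (1 : Mat q)).submatrix (⇑finProdFinEquiv.symm) (⇑finProdFinEquiv.symm)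

/-- `b ↦ 1 ⊗ b`, with indices identified via `finProdFinEquiv : Fin p × Fin q ≃ Fin (p*q)`. -/
def rKronFun (p q : ℕ) (b : Mat q) : Mat (p * q) :=
  ((1 : Mat p) ⊗ₖ b).submatrix (⇑finProdFinEquiv.symm) (⇑finProdFinEquiv.symm)

lemma lKronFun_one (p q : ℕ) : lKronFun p q 1 = 1 := by
  unfold lKronFun; rw [Matrix.one_kronecker_one, Matrix.submatrix_one_equiv]

lemma rKronFun_one (p q : ℕ) : rKronFun p q 1 = 1 := by
  unfold rKronFun; rw [Matrix.one_kronecker_one, Matrix.submatrix_one_equiv]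

lemma lKronFun_mul (p q : ℕ) (a b : Mat p) :
    lKronFun p q (a * b) = lKronFun p q a * lKronFun p q b := by
  unfold lKronFun
  rw [Matrix.submatrix_mul_equiv _ _ _ finProdFinEquiv.symm _, ← Matrix.mul_kronecker_mul,
    one_mul]

lemma rKronFun_mul (p q : ℕ) (a b : Mat q) :
    rKronFun p q (a * b) = rKronFun p q a * rKronFun p q b := by
  unfold rKronFun
  rw [Matrix.submatrix_mul_equiv _ _ _ finProdFinEquiv.symm _, ← Matrix.mul_kronecker_mul,
    one_mul]

lemma lKronFun_add (p q : ℕ) (a b : Mat p) :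
    lKronFun p q (a + b) = lKronFun p q a + lKronFun p q b := by
  unfold lKronFun; rw [Matrix.add_kronecker, Matrix.submatrix_add]; rfl

lemma rKronFun_add (p q : ℕ) (a b : Mat q) :
    rKronFun p q (a + b) = rKronFun p q a + rKronFun p q b := by
  unfold rKronFun; rw [Matrix.kronecker_add, Matrix.submatrix_add]; rfl

lemma lKronFun_smul (p q : ℕ) (c : ℂ) (a : Mat p) :
    lKronFun p q (c • a) = c • lKronFun p q a := by
  unfold lKronFun; rw [Matrix.smul_kronecker, Matrix.submatrix_smul]; rfl

lemma rKronFun_smul (p q : ℕ) (c : ℂ) (b : Mat q) :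
    rKronFun p q (c • b) = c • rKronFun p q b := by
  unfold rKronFun; rw [Matrix.kronecker_smul, Matrix.submatrix_smul]; rfl

lemma lKronFun_star (p q : ℕ) (a : Mat p) :
    lKronFun p q (star a) = star (lKronFun p q a) := by
  ext x y
  simp [lKronFun, Matrix.submatrix_apply, Matrix.star_apply, Matrix.kroneckerMap_apply,
    Matrix.one_apply, star_mul', apply_ite, eq_comm]
  split_ifs with h <;> tauto

lemma rKronFun_star (p q : ℕ) (b : Mat q) :
    rKronFun p q (star b) = star (rKronFun p q b) := by
  ext x y
  simp [rKronFun, Matrix.submatrix_apply, Matrix.star_apply, Matrix.kroneckerMap_apply,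
    Matrix.one_apply, star_mul', apply_ite, eq_comm]
  split_ifs with h <;> tauto

/-- The unital star-algebra embedding `M_p(ℂ) → M_{pq}(ℂ)`, `a ↦ a ⊗ 1`. -/
def lKron (p q : ℕ) : Mat p →⋆ₐ[ℂ] Mat (p * q) :=
  { toFun := lKronFun p q
    map_one' := lKronFun_one p q
    map_mul' := lKronFun_mul p q
    map_zero' := by
      show lKronFun p q 0 = 0
      have := lKronFun_smul p q 0 1; simpa using this
    map_add' := lKronFun_add p q
    commutes' := fun c => by
      show lKronFun p q (algebraMap ℂ (Mat p) c) = algebraMap ℂ (Mat (p * q)) c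
      rw [Algebra.algebraMap_eq_smul_one, Algebra.algebraMap_eq_smul_one,
        lKronFun_smul, lKronFun_one]
    map_star' := fun a => by
      show lKronFun p q (star a) = star (lKronFun p q a)
      exact lKronFun_star p q a }

/-- The unital star-algebra embedding `M_q(ℂ) → M_{pq}(ℂ)`, `b ↦ 1 ⊗ b`. -/
def rKron (p q : ℕ) : Mat q →⋆ₐ[ℂ] Mat (p * q) :=
  { toFun := rKronFun p q
    map_one' := rKronFun_one p q
    map_mul' := rKronFun_mul p q
    map_zero' := by
      show rKronFun p q 0 = 0
      have := rKronFun_smul p q 0 1; simpa using this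
    map_add' := rKronFun_add p q
    commutes' := fun c => by
      show rKronFun p q (algebraMap ℂ (Mat q) c) = algebraMap ℂ (Mat (p * q)) c
      rw [Algebra.algebraMap_eq_smul_one, Algebra.algebraMap_eq_smul_one,
        rKronFun_smul, rKronFun_one]
    map_star' := fun b => by
      show rKronFun p q (star b) = star (rKronFun p q b)
      exact rKronFun_star p q b }

/-- The dimension drop algebra `Z_{p,q}`: the star subalgebra of `C([0,1], M_{pq}(ℂ))`
consisting of those `f` with `f 0 ∈ M_p(ℂ) ⊗ 1` and `f 1 ∈ 1 ⊗ M_q(ℂ)`. -/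
def Zpq (p q : ℕ) : StarSubalgebra ℂ (𝔸 (p * q)) :=
  ((lKron p q).range.comap (evalHom (p * q) 0)) ⊓
    ((rKron p q).range.comap (evalHom (p * q) 1))

/-- `mult k ξ s t` is the number of indices `i` with `ξ i s = t`. -/
def mult (k : ℕ) (ξ : Fin k → C(𝕀, 𝕀)) (s t : 𝕀) : ℕ :=
  Set.ncard {i : Fin k | ξ i s = t}

/-!
At an endpoint `s`, `φ(f)(s)` is block diagonal with blocks `f(ξⱼ(s))`. Grouping the blocks by
their value `t`, it becomes a direct sum over `t` of `c ⊗ 1_{n_sᵗ}` with `c` in the fibre of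
`Z_{p,q}` at `t`, which is itself `M_p ⊗ 1_q` at `0`, `1_p ⊗ M_q` at `1` and `M_{pq}` inside. So
one permutation conjugates all of these into `M_{p'} ⊗ 1_{q'}` (resp. `1_{p'} ⊗ M_{q'}`) as soon as
`q'` (resp. `p'`) divides each `q n_s⁰`, `p n_s¹`, `n_sᵗ`. Conversely, testing on an `f` that is a
minimal projection of the fibre at `t` and vanishes at the other `ξⱼ(s)` gives a projection of
rank `q n_s⁰`, `p n_s¹` or `n_sᵗ`, and every projection in `M_{p'} ⊗ 1_{q'}` has rank divisible
by `q'`. Finally the two endpoint permutation matrices are joined by a path of unitaries, since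
the unitary group of `M_n(ℂ)` is path connected.
-/

open Matrix

section Ampliation

variable {R : Type*} [Semiring R] {ι ι' : Type}

/-- One reindexing `e` puts every matrix of `S` in the form `a ⊗ 1_d` (a simultaneous
`d`-fold ampliation). -/
def IsAmpliation (d : ℕ) (S : Set (Matrix ι ι R)) : Prop :=
  ∃ (κ : Type) (e : κ × Fin d ≃ ι), ∀ M ∈ S, ∃ a : Matrix κ κ R, M.submatrix e e = a ⊗ₖ 1

theorem IsAmpliation.mono {d : ℕ} {S T : Set (Matrix ι ι R)} (h : IsAmpliation d T)
    (hST : S ⊆ T) : IsAmpliation d S :=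
  let ⟨κ, e, he⟩ := h
  ⟨κ, e, fun M hM => he M (hST hM)⟩

theorem isAmpliation_card_of_submatrix_eq {κ μ : Type} [Fintype μ] [DecidableEq μ]
    {S : Set (Matrix ι ι R)} (e : κ × μ ≃ ι)
    (h : ∀ M ∈ S, ∃ a : Matrix κ κ R, M.submatrix e e = a ⊗ₖ 1) :
    IsAmpliation (Fintype.card μ) S := by
  refine ⟨κ, (Equiv.prodCongr (Equiv.refl κ) (Fintype.equivFin μ).symm).trans e, fun M hM => ?_⟩
  obtain ⟨a, ha⟩ := h M hM
  refine ⟨a, ?_⟩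
  ext ⟨x, i⟩ ⟨y, j⟩
  simpa [kroneckerMap_apply, one_apply] using
    congr_fun₂ ha (x, (Fintype.equivFin μ).symm i) (y, (Fintype.equivFin μ).symm j)

theorem isAmpliation_one (S : Set (Matrix ι ι R)) : IsAmpliation 1 S :=
  ⟨ι, Equiv.prodUnique ι (Fin 1), fun M _ => ⟨M, by
    ext ⟨x, i⟩ ⟨y, j⟩
    simp [kroneckerMap_apply, Subsingleton.elim i j]⟩⟩

theorem IsAmpliation.of_dvd {d m : ℕ} {S : Set (Matrix ι ι R)} (h : IsAmpliation m S)
    (hd : d ∣ m) : IsAmpliation d S := by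
  obtain ⟨r, rfl⟩ := hd
  obtain ⟨κ, e, he⟩ := h
  refine ⟨κ × Fin r, (Equiv.prodAssoc κ (Fin r) (Fin d)).trans
    ((Equiv.prodCongr (Equiv.refl κ) (finProdFinEquiv.trans (finCongr (mul_comm r d)))).trans e),
    fun M hM => ?_⟩
  obtain ⟨a, ha⟩ := he M hM
  refine ⟨a ⊗ₖ 1, ?_⟩
  ext ⟨⟨x, i⟩, s⟩ ⟨⟨y, j⟩, t⟩
  have := congr_fun₂ ha (x, Fin.cast (mul_comm r d) (finProdFinEquiv (i, s)))
    (y, Fin.cast (mul_comm r d) (finProdFinEquiv (j, t)))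
  simp only [submatrix_apply, kroneckerMap_apply, one_apply, Fin.cast_inj,
    EmbeddingLike.apply_eq_iff_eq, Prod.mk.injEq] at this ⊢
  refine this.trans ?_
  split_ifs <;> simp_all

theorem IsAmpliation.image_kronecker_one {m : ℕ} {S : Set (Matrix ι ι R)} (h : IsAmpliation m S)
    (β : Type) [Fintype β] [DecidableEq β] :
    IsAmpliation (m * Fintype.card β) ((· ⊗ₖ (1 : Matrix β β R)) '' S) := by
  obtain ⟨κ, e, he⟩ := h
  rw [← Fintype.card_fin m, ← Fintype.card_prod]
  refine isAmpliation_card_of_submatrix_eq ((Equiv.prodAssoc κ (Fin m) β).symm.trans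
    (Equiv.prodCongr e (Equiv.refl β))) ?_
  rintro _ ⟨M, hM, rfl⟩
  obtain ⟨a, ha⟩ := he M hM
  refine ⟨a, ?_⟩
  ext ⟨x, i, b⟩ ⟨y, j, b'⟩
  have := congr_fun₂ ha (x, i) (y, j)
  simp only [submatrix_apply, kroneckerMap_apply, one_apply] at this ⊢
  split_ifs <;> simp_all

theorem IsAmpliation.image_submatrix {d : ℕ} {S : Set (Matrix ι ι R)} (h : IsAmpliation d S)
    (ε : ι' ≃ ι) : IsAmpliation d ((·.submatrix ε ε) '' S) := by
  obtain ⟨κ, e, he⟩ := h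
  refine ⟨κ, e.trans ε.symm, ?_⟩
  rintro _ ⟨M, hM, rfl⟩
  simpa [submatrix_submatrix, Function.comp_def] using he M hM

theorem isAmpliation_image_blockDiagonal' {α : Type} [DecidableEq α] {ι : α → Type} {d : ℕ}
    {S : ∀ t, Set (Matrix (ι t) (ι t) R)} (h : ∀ t, IsAmpliation d (S t)) :
    IsAmpliation d (blockDiagonal' '' Set.univ.pi S) := by
  choose κ e he using h
  refine ⟨Σ t, κ t, (Equiv.sigmaProdDistrib κ (Fin d)).trans (Equiv.sigmaCongrRight e), ?_⟩
  rintro _ ⟨c, hc, rfl⟩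
  choose a ha using fun t => he t (c t) (hc t trivial)
  refine ⟨blockDiagonal' a, ?_⟩
  ext ⟨⟨t, x⟩, i⟩ ⟨⟨t', y⟩, j⟩
  by_cases htt : t = t'
  · subst htt
    simpa [kroneckerMap_apply, blockDiagonal'_apply_eq] using congr_fun₂ (ha t) (x, i) (y, j)
  · simp [kroneckerMap_apply, blockDiagonal'_apply_ne _ _ _ htt]

theorem IsAmpliation.exists_equiv_fin_prod [Fintype ι] {n d : ℕ} {S : Set (Matrix ι ι R)}
    (h : IsAmpliation d S) (hcard : Fintype.card ι = n * d) (hd : 0 < d) :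
    ∃ e : Fin n × Fin d ≃ ι, ∀ M ∈ S, ∃ a : Matrix (Fin n) (Fin n) R, M.submatrix e e = a ⊗ₖ 1 := by
  obtain ⟨κ, e, he⟩ := h
  have : Finite κ := Finite.of_injective (fun x => e (x, ⟨0, hd⟩)) fun x y h => by simpa using h
  have hκ : Nat.card κ = n := by
    have := Nat.card_congr e
    rw [Nat.card_prod, Nat.card_fin, Nat.card_eq_fintype_card (α := ι), hcard] at this
    exact Nat.eq_of_mul_eq_mul_right hd this
  let φ := Finite.equivFinOfCardEq hκ
  refine ⟨(Equiv.prodCongr φ.symm (Equiv.refl _)).trans e, fun M hM => ?_⟩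
  obtain ⟨a, ha⟩ := he M hM
  refine ⟨a.submatrix φ.symm φ.symm, ?_⟩
  ext ⟨x, i⟩ ⟨y, j⟩
  simpa [kroneckerMap_apply] using congr_fun₂ ha (φ.symm x, i) (φ.symm y, j)

end Ampliation

section Grouping

variable {R : Type*} [Semiring R] {ι o α : Type} [DecidableEq o] [DecidableEq α]

def fibreEquiv (w : o → α) : ι × o ≃ Σ t, ι × {j // w j = t} where
  toFun x := ⟨w x.2, x.1, x.2, rfl⟩
  invFun x := (x.2.1, x.2.2.1)
  left_inv _ := rfl
  right_inv := by rintro ⟨t, x, j, rfl⟩; rfl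

theorem blockDiagonal'_kronecker_one_eq_submatrix (w : o → α) (c : α → Matrix ι ι R) :
    blockDiagonal' (fun t => c t ⊗ₖ (1 : Matrix {j // w j = t} {j // w j = t} R)) =
      (blockDiagonal fun j => c (w j)).submatrix (fibreEquiv w).symm (fibreEquiv w).symm := by
  ext ⟨t, x, j, hj⟩ ⟨t', y, j', hj'⟩
  by_cases htt : t = t'
  · subst htt hj
    simp [fibreEquiv, blockDiagonal'_apply_eq, blockDiagonal_apply, kroneckerMap_apply,
      one_apply, Subtype.ext_iff]
  · have hjj : j ≠ j' := by rintro rfl; exact htt (hj.symm.trans hj')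
    simp [fibreEquiv, blockDiagonal'_apply_ne _ _ _ htt, blockDiagonal_apply_ne _ _ _ hjj]

theorem isAmpliation_image_blockDiagonal_comp [Fintype o] (w : o → α) {d : ℕ} {m : α → ℕ}
    {S : α → Set (Matrix ι ι R)} (hS : ∀ t, IsAmpliation (m t) (S t))
    (hd : ∀ t, d ∣ m t * Fintype.card {j // w j = t}) :
    IsAmpliation d
      ((fun c : α → Matrix ι ι R => blockDiagonal fun j => c (w j)) '' Set.univ.pi S) := by
  have hT := isAmpliation_image_blockDiagonal' fun t => ((hS t).image_kronecker_one _).of_dvd (hd t)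
  refine (hT.image_submatrix (fibreEquiv w)).mono ?_
  rintro _ ⟨c, hc, rfl⟩
  refine ⟨_, ⟨fun t => c t ⊗ₖ 1, fun t _ => ⟨c t, hc t trivial, rfl⟩, rfl⟩, ?_⟩
  simp only [blockDiagonal'_kronecker_one_eq_submatrix, submatrix_submatrix, Equiv.symm_comp_self,
    submatrix_id_id]

end Grouping

section Trace

variable {K : Type*} [Field K] {ι : Type} [Fintype ι]

theorem Matrix.trace_submatrix_equiv {R m n : Type*} [Fintype m] [Fintype n] [AddCommMonoid R]
    (e : m ≃ n) (A : Matrix n n R) : (A.submatrix e e).trace = A.trace :=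
  Fintype.sum_equiv e _ _ fun _ => rfl

theorem IsIdempotentElem.exists_trace_eq_natCast [DecidableEq ι] {A : Matrix ι ι K}
    (hA : IsIdempotentElem A) : ∃ r : ℕ, A.trace = r := by
  have hlin : IsIdempotentElem (toLin' A) := hA.map toLinAlgEquiv'
  obtain ⟨V, hV⟩ := (LinearMap.isProj_iff_isIdempotentElem _).mpr hlin
  refine ⟨Module.finrank K V, ?_⟩
  rw [← hV.trace, LinearMap.trace_eq_matrix_trace K (Pi.basisFun K ι),
    LinearMap.toMatrix_eq_toMatrix', LinearMap.toMatrix'_toLin']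

theorem IsAmpliation.exists_trace_eq_mul {d : ℕ} {S : Set (Matrix ι ι K)} (h : IsAmpliation d S)
    {M : Matrix ι ι K} (hM : M ∈ S) (hMM : IsIdempotentElem M) : ∃ r : ℕ, M.trace = d * r := by
  classical
  obtain ⟨κ, e, he⟩ := h
  obtain ⟨a, ha⟩ := he M hM
  rcases Nat.eq_zero_or_pos d with rfl | hd
  · have : IsEmpty ι := e.symm.isEmpty
    exact ⟨0, by simp [trace]⟩
  have : Fintype κ := Fintype.ofInjective (fun x => e (x, ⟨0, hd⟩)) fun x y h => by simpa using h
  have haa : IsIdempotentElem a := by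
    have : (a * a) ⊗ₖ (1 : Matrix (Fin d) (Fin d) K) = a ⊗ₖ 1 :=
      calc (a * a) ⊗ₖ 1 = (a ⊗ₖ 1) * (a ⊗ₖ (1 : Matrix (Fin d) (Fin d) K)) := by
            rw [← mul_kronecker_mul, mul_one]
        _ = a ⊗ₖ 1 := by rw [← ha, submatrix_mul_equiv, hMM.eq]
    ext x y
    simpa [kroneckerMap_apply] using congr_fun₂ this (x, ⟨0, hd⟩) (y, ⟨0, hd⟩)
  obtain ⟨r, hr⟩ := haa.exists_trace_eq_natCast
  exact ⟨r, by rw [← trace_submatrix_equiv e, ha, trace_kronecker, trace_one, hr]; simp [mul_comm]⟩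

end Trace

section UnitaryPath

open Complex selfAdjoint Unitary

variable {n : Type*} [Fintype n] [DecidableEq n]

/-- Unlike `expUnitary_argSelfAdjoint`, no bound `‖u - 1‖ < 2` is needed: `arg` is continuous on
the finite spectrum of a matrix. -/
theorem Matrix.expUnitary_argSelfAdjoint (u : unitary (Matrix n n ℂ)) :
    expUnitary (argSelfAdjoint u) = u := by
  apply Subtype.ext
  have : ContinuousOn arg (spectrum ℂ (u : Matrix n n ℂ)) :=
    (Matrix.finite_spectrum _).continuousOn _
  rw [expUnitary_coe, argSelfAdjoint_coe, ← CFC.exp_eq_normedSpace_exp (𝕜 := ℂ),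
    ← cfc_comp_smul .., ← cfc_comp' ..]
  conv_rhs => rw [← cfc_id' ℂ (u : Matrix n n ℂ)]
  refine cfc_congr fun y hy ↦ ?_
  have hy₁ : ‖y‖ = 1 := spectrum.norm_eq_one_of_unitary u.2 hy
  have : I * y.arg = log y := Complex.ext (by simp [log_re, hy₁]) (by simp [log_im])
  simpa [← exp_eq_exp_ℂ, this] using exp_log (by rintro rfl; simp at hy₁)

instance Matrix.pathConnectedSpace_unitary : PathConnectedSpace (unitary (Matrix n n ℂ)) :=
  have h (u : unitary (Matrix n n ℂ)) : Joined 1 u :=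
    Matrix.expUnitary_argSelfAdjoint u ▸ joined_one_expUnitary _
  ⟨⟨1⟩, fun u v => (h u).symm.trans (h v)⟩

theorem exists_unitary_path {N : ℕ} (A B : unitary (Mat N)) :
    ∃ u ∈ unitary (𝔸 N), u 0 = A ∧ u 1 = B := by
  let γ : Path A B := PathConnectedSpace.somePath A B
  refine ⟨⟨fun t => γ t, continuous_subtype_val.comp γ.continuous⟩, ⟨?_, ?_⟩, by simp, by simp⟩ <;>
    ext1 t
  exacts [(γ t).2.1, (γ t).2.2]

theorem Matrix.permMatrix_mem_unitary (σ : Equiv.Perm n) :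
    σ.permMatrix ℂ ∈ unitary (Matrix n n ℂ) := by
  rw [Unitary.mem_iff, star_eq_conjTranspose, conjTranspose_permMatrix, ← permMatrix_mul,
    ← permMatrix_mul, mul_inv_cancel, inv_mul_cancel, permMatrix_one]
  exact ⟨rfl, rfl⟩

theorem Matrix.permMatrix_mul_mul_star (σ : Equiv.Perm n) (M : Matrix n n ℂ) :
    σ.permMatrix ℂ * M * star (σ.permMatrix ℂ) = M.submatrix σ σ := by
  rw [star_eq_conjTranspose, conjTranspose_permMatrix, Equiv.Perm.permMatrix,
    PEquiv.toMatrix_toPEquiv_mul, Equiv.Perm.permMatrix, PEquiv.mul_toMatrix_toPEquiv,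
    submatrix_submatrix]
  rfl

end UnitaryPath

section DimensionDrop

theorem isAmpliation_range_lKron (p q : ℕ) :
    IsAmpliation q ((lKron p q).range : Set (Mat (p * q))) := by
  refine ⟨Fin p, finProdFinEquiv, ?_⟩
  rintro _ ⟨a, rfl⟩
  exact ⟨a, by simp [lKron, lKronFun, submatrix_submatrix]⟩

theorem isAmpliation_range_rKron (p q : ℕ) :
    IsAmpliation p ((rKron p q).range : Set (Mat (p * q))) := by
  refine ⟨Fin q, (Equiv.prodComm _ _).trans finProdFinEquiv, ?_⟩
  rintro _ ⟨b, rfl⟩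
  refine ⟨b, ?_⟩
  ext ⟨i, α⟩ ⟨j, β⟩
  simp [rKron, rKronFun, kroneckerMap_apply, one_apply, mul_comm]

variable {p q : ℕ}

theorem IsAmpliation.exists_perm_submatrix_mem_range_lKron {S : Set (Mat (p * q))}
    (h : IsAmpliation q S) (hq : 0 < q) :
    ∃ σ : Equiv.Perm (Fin (p * q)), ∀ M ∈ S, M.submatrix σ σ ∈ (lKron p q).range := by
  obtain ⟨e, he⟩ := h.exists_equiv_fin_prod (n := p) (by simp) hq
  refine ⟨finProdFinEquiv.symm.trans e, fun M hM => ?_⟩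
  obtain ⟨a, ha⟩ := he M hM
  exact ⟨a, by simp [lKron, lKronFun, ← ha, submatrix_submatrix, Function.comp_def]⟩

theorem IsAmpliation.exists_perm_submatrix_mem_range_rKron {S : Set (Mat (p * q))}
    (h : IsAmpliation p S) (hp : 0 < p) :
    ∃ σ : Equiv.Perm (Fin (p * q)), ∀ M ∈ S, M.submatrix σ σ ∈ (rKron p q).range := by
  obtain ⟨e, he⟩ := h.exists_equiv_fin_prod (n := q) (by simp [mul_comm]) hp
  refine ⟨finProdFinEquiv.symm.trans ((Equiv.prodComm _ _).trans e), fun M hM => ?_⟩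
  obtain ⟨b, hb⟩ := he M hM
  refine ⟨b, ?_⟩
  change _ = (M.submatrix e e).submatrix (Prod.swap ∘ finProdFinEquiv.symm)
    (Prod.swap ∘ finProdFinEquiv.symm)
  rw [hb]
  ext x y
  simp [rKron, rKronFun, kroneckerMap_apply, one_apply, mul_comm]

end DimensionDrop

section DiagL

variable {n k m : ℕ}

def diagEquiv (h : n * k = m) : Fin m ≃ Fin n × Fin k :=
  (finCongr h.symm).trans finProdFinEquiv.symm

theorem diagL_eq_submatrix (h : n * k = m) (g : Fin k → Mat n) :
    diagL n k m h g = (blockDiagonal g).submatrix (diagEquiv h) (diagEquiv h) := rfl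

theorem diagL_mul (h : n * k = m) (g₁ g₂ : Fin k → Mat n) :
    diagL n k m h g₁ * diagL n k m h g₂ = diagL n k m h (g₁ * g₂) := by
  rw [diagL_eq_submatrix, diagL_eq_submatrix, diagL_eq_submatrix, submatrix_mul_equiv,
    ← blockDiagonal_mul]
  rfl

theorem trace_diagL (h : n * k = m) (g : Fin k → Mat n) :
    (diagL n k m h g).trace = ∑ j, (g j).trace := by
  rw [diagL_eq_submatrix, trace_submatrix_equiv, trace_blockDiagonal]

end DiagL

section Fibres

variable {p q : ℕ}

/-- The multiplicity of the fibre of `Z_{p,q}` at `t` inside `M_{pq}`: the fibre is `M_p ⊗ 1_q`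
at `0`, `1_p ⊗ M_q` at `1` and all of `M_{pq}` in between. -/
def dropMult (p q : ℕ) (t : 𝕀) : ℕ := if t = 0 then q else if t = 1 then p else 1

def dropFibre (p q : ℕ) (t : 𝕀) : Set (Mat (p * q)) :=
  {g | (t = 0 → g ∈ (lKron p q).range) ∧ (t = 1 → g ∈ (rKron p q).range)}

theorem mem_Zpq_iff {f : 𝔸 (p * q)} :
    f ∈ Zpq p q ↔ f 0 ∈ (lKron p q).range ∧ f 1 ∈ (rKron p q).range := Iff.rfl

theorem apply_mem_dropFibre {f : 𝔸 (p * q)} (hf : f ∈ Zpq p q) (t : 𝕀) :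
    f t ∈ dropFibre p q t :=
  ⟨by rintro rfl; exact hf.1, by rintro rfl; exact hf.2⟩

theorem isAmpliation_dropFibre (p q : ℕ) (t : 𝕀) :
    IsAmpliation (dropMult p q t) (dropFibre p q t) := by
  unfold dropMult
  split_ifs with h0 h1
  · exact (isAmpliation_range_lKron p q).mono fun g hg => hg.1 h0
  · exact (isAmpliation_range_rKron p q).mono fun g hg => hg.2 h1
  · exact isAmpliation_one _

theorem exists_isIdempotentElem_mem_dropFibre (hp : 0 < p) (hq : 0 < q) (t : 𝕀) :
    ∃ g ∈ dropFibre p q t, IsIdempotentElem g ∧ g.trace = dropMult p q t := by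
  have hE {n : ℕ} (i : Fin n) : IsIdempotentElem (single i i (1 : ℂ)) := by
    simp [IsIdempotentElem]
  unfold dropMult
  split_ifs with h0 h1
  · refine ⟨lKron p q (single ⟨0, hp⟩ ⟨0, hp⟩ 1), ⟨fun _ => ⟨_, rfl⟩, fun h1 => ?_⟩,
      (hE _).map _, ?_⟩
    · exact absurd (h0.symm.trans h1) zero_ne_one
    · simp [lKron, lKronFun, trace_submatrix_equiv, trace_kronecker]
  · refine ⟨rKron p q (single ⟨0, hq⟩ ⟨0, hq⟩ 1), ⟨fun h => absurd h h0, fun _ => ⟨_, rfl⟩⟩,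
      (hE _).map _, ?_⟩
    simp [rKron, rKronFun, trace_submatrix_equiv, trace_kronecker]
  · exact ⟨single ⟨0, Nat.mul_pos hp hq⟩ ⟨0, Nat.mul_pos hp hq⟩ 1,
      ⟨fun h => absurd h h0, fun h => absurd h h1⟩, hE _, by simp⟩

/-- `f = c • g` for a Urysohn function `c` that is `1` at `t` and `0` at the other points of
`S ∪ {0, 1}`; vanishing at the endpoints other than `t` keeps `f` in `Z_{p,q}`. -/
theorem exists_mem_Zpq_eq_ite (S : Finset 𝕀) {t : 𝕀} {g : Mat (p * q)}
    (hg : g ∈ dropFibre p q t) : ∃ f ∈ Zpq p q, ∀ s ∈ S, f s = if s = t then g else 0 := by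
  classical
  obtain ⟨c, hc0, hc1, -⟩ := exists_continuous_zero_one_of_isClosed
    (insert 0 (insert 1 S) |>.erase t).isClosed isClosed_singleton
    (Set.disjoint_singleton_right.2 (Finset.notMem_erase t _))
  have hc (s) (hs : s ∈ insert 0 (insert 1 S)) : (c s : ℂ) • g = if s = t then g else 0 := by
    split_ifs with h
    · simp [h, hc1 (Set.mem_singleton t)]
    · simp [hc0 (Finset.mem_coe.2 (Finset.mem_erase.2 ⟨h, hs⟩))]
  refine ⟨⟨fun s => (c s : ℂ) • g, by fun_prop⟩, mem_Zpq_iff.2 ⟨?_, ?_⟩,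
    fun s hs => hc s (by simp [hs])⟩
  · change ((c 0 : ℝ) : ℂ) • g ∈ _
    rw [hc 0 (by simp)]
    split_ifs with h
    exacts [hg.1 h.symm, zero_mem _]
  · change ((c 1 : ℝ) : ℂ) • g ∈ _
    rw [hc 1 (by simp)]
    split_ifs with h
    exacts [hg.2 h.symm, zero_mem _]

theorem forall_dvd_dropMult_mul_iff {d : ℕ} (n : 𝕀 → ℕ) :
    (∀ t, d ∣ dropMult p q t * n t) ↔
      d ∣ q * n 0 ∧ d ∣ p * n 1 ∧ ∀ t, t ≠ 0 → t ≠ 1 → d ∣ n t := by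
  refine ⟨fun h => ⟨by simpa [dropMult] using h 0, by simpa [dropMult] using h 1,
    fun t h0 h1 => by simpa [dropMult, h0, h1] using h t⟩, fun ⟨h0, h1, h⟩ t => ?_⟩
  unfold dropMult
  split_ifs with ht0 ht1
  exacts [ht0 ▸ h0, ht1 ▸ h1, (one_mul (n t)).symm ▸ h t ht0 ht1]

theorem dvd_conditions_iff {p' q' : ℕ} (n₀ n₁ : 𝕀 → ℕ) :
    (q' ∣ q * n₀ 0 ∧ q' ∣ p * n₀ 1 ∧ p' ∣ q * n₁ 0 ∧ p' ∣ p * n₁ 1 ∧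
      ∀ t : 𝕀, t ≠ 0 → t ≠ 1 → q' ∣ n₀ t ∧ p' ∣ n₁ t) ↔
      (∀ t, q' ∣ dropMult p q t * n₀ t) ∧ (∀ t, p' ∣ dropMult p q t * n₁ t) := by
  rw [forall_dvd_dropMult_mul_iff, forall_dvd_dropMult_mul_iff]
  exact ⟨fun ⟨h00, h01, h10, h11, h⟩ => ⟨⟨h00, h01, fun t h0 h1 => (h t h0 h1).1⟩,
      ⟨h10, h11, fun t h0 h1 => (h t h0 h1).2⟩⟩,
    fun ⟨⟨h00, h01, h0⟩, ⟨h10, h11, h1⟩⟩ => ⟨h00, h01, h10, h11, fun t ht0 ht1 =>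
      ⟨h0 t ht0 ht1, h1 t ht0 ht1⟩⟩⟩

end Fibres

section Endpoints

variable {p q k N : ℕ}

open Classical in
theorem mult_eq_card (ξ : Fin k → C(𝕀, 𝕀)) (s t : 𝕀) :
    mult k ξ s t = Fintype.card {j // ξ j s = t} := by
  rw [mult, ← Nat.card_coe_set_eq, Nat.card_eq_fintype_card]
  rfl

theorem dvd_dropMult_mul_mult (hp : 0 < p) (hq : 0 < q) (hN : p * q * k = N)
    (ξ : Fin k → C(𝕀, 𝕀)) (s : 𝕀) {d : ℕ} {S : Set (Mat N)} (hS : IsAmpliation d S) {v : Mat N}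
    (hv : v ∈ unitary (Mat N))
    (hmem : ∀ f ∈ Zpq p q, v * diagL (p * q) k N hN (fun j => f (ξ j s)) * star v ∈ S) (t : 𝕀) :
    d ∣ dropMult p q t * mult k ξ s t := by
  classical
  obtain ⟨g, hg, hgg, hgt⟩ := exists_isIdempotentElem_mem_dropFibre hp hq t
  obtain ⟨f, hf, hft⟩ := exists_mem_Zpq_eq_ite (Finset.univ.image fun j => ξ j s) hg
  set P := diagL (p * q) k N hN fun j => f (ξ j s)
  have hP : P = diagL (p * q) k N hN fun j => if ξ j s = t then g else 0 :=
    congrArg (diagL (p * q) k N hN) <| funext fun j =>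
      hft _ (Finset.mem_image_of_mem _ (Finset.mem_univ j))
  have hPP : IsIdempotentElem P := by
    rw [IsIdempotentElem, hP, diagL_mul]
    congr 1
    funext j
    simp only [Pi.mul_apply]
    split_ifs <;> simp [hgg.eq]
  have hconj : IsIdempotentElem (v * P * star v) := by
    rw [IsIdempotentElem,
      show v * P * star v * (v * P * star v) = v * (P * (star v * v) * P) * star v by noncomm_ring,
      Unitary.star_mul_self_of_mem hv, mul_one, hPP.eq]
  have htr : (v * P * star v).trace = (dropMult p q t * mult k ξ s t : ℕ) := by
    rw [trace_mul_cycle, Unitary.star_mul_self_of_mem hv, one_mul, hP, trace_diagL, mult_eq_card]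
    simp [apply_ite, hgt, Finset.sum_ite, Fintype.card_subtype, mul_comm]
  obtain ⟨r, hr⟩ := hS.exists_trace_eq_mul (hmem f hf) hconj
  exact ⟨r, by exact_mod_cast htr.symm.trans hr⟩

theorem isAmpliation_image_diagL (hN : p * q * k = N) (ξ : Fin k → C(𝕀, 𝕀)) (s : 𝕀) {d : ℕ}
    (hd : ∀ t, d ∣ dropMult p q t * mult k ξ s t) :
    IsAmpliation d ((fun f : 𝔸 (p * q) => diagL (p * q) k N hN fun j => f (ξ j s)) '' Zpq p q) := by
  classical
  refine ((isAmpliation_image_blockDiagonal_comp (fun j => ξ j s) (isAmpliation_dropFibre p q)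
    fun t => mult_eq_card ξ s t ▸ hd t).image_submatrix (diagEquiv hN)).mono ?_
  rintro _ ⟨f, hf, rfl⟩
  exact ⟨_, ⟨fun t => f t, fun t _ => apply_mem_dropFibre hf t, rfl⟩, rfl⟩

end Endpoints

theorem statement10_general (p q p' q' k : ℕ) (hp : 1 ≤ p) (hq : 1 ≤ q) (hp' : 1 ≤ p')
    (hq' : 1 ≤ q') (hdim : p * q * k = p' * q') (ξ : Fin k → C(𝕀, 𝕀)) :
    (∃ u ∈ unitary (𝔸 (p' * q')), ∀ f : ↥(Zpq p q),
        u * diag (p * q) k (p' * q') hdim ξ ↑f * star u ∈ Zpq p' q') ↔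
    ((q' ∣ q * mult k ξ 0 0) ∧ (q' ∣ p * mult k ξ 0 1) ∧
      (p' ∣ q * mult k ξ 1 0) ∧ (p' ∣ p * mult k ξ 1 1) ∧
      ∀ t : 𝕀, t ≠ 0 → t ≠ 1 → q' ∣ mult k ξ 0 t ∧ p' ∣ mult k ξ 1 t) := by
  rw [dvd_conditions_iff]
  constructor
  · rintro ⟨u, hu, hmem⟩
    have hu' (t : 𝕀) : u t ∈ unitary (Mat (p' * q')) :=
      ⟨congr_arg (· t) hu.1, congr_arg (· t) hu.2⟩
    exact ⟨dvd_dropMult_mul_mult hp hq hdim ξ 0 (isAmpliation_range_lKron p' q') (hu' 0)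
        fun f hf => (mem_Zpq_iff.1 (hmem ⟨f, hf⟩)).1,
      dvd_dropMult_mul_mult hp hq hdim ξ 1 (isAmpliation_range_rKron p' q') (hu' 1)
        fun f hf => (mem_Zpq_iff.1 (hmem ⟨f, hf⟩)).2⟩
  · rintro ⟨h0, h1⟩
    obtain ⟨σ₀, hσ₀⟩ :=
      (isAmpliation_image_diagL hdim ξ 0 h0).exists_perm_submatrix_mem_range_lKron hq'
    obtain ⟨σ₁, hσ₁⟩ :=
      (isAmpliation_image_diagL hdim ξ 1 h1).exists_perm_submatrix_mem_range_rKron hp'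
    obtain ⟨u, hu, hu0, hu1⟩ :=
      exists_unitary_path ⟨_, permMatrix_mem_unitary σ₀⟩ ⟨_, permMatrix_mem_unitary σ₁⟩
    refine ⟨u, hu, fun f => mem_Zpq_iff.2 ⟨?_, ?_⟩⟩
    · change u 0 * _ * star (u 0) ∈ _
      rw [hu0, permMatrix_mul_mul_star]
      exact hσ₀ _ ⟨f, f.2, rfl⟩
    · change u 1 * _ * star (u 1) ∈ _
      rw [hu1, permMatrix_mul_mul_star]
      exact hσ₁ _ ⟨f, f.2, rfl⟩

/-- For a diagonal *-homomorphism `φ(f) = diag(f∘ξ₁, …, f∘ξ_k)` from the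
dimension drop algebra `Z_{p,q}` into `𝔸 (p'q')` (with `kpq = p'q'`), the existence of a
unitary `u` with `u φ(·) u* ⊆ Z_{p',q'}` is equivalent to the arithmetic congruences on the
multiplicities `n_sᵗ = mult k ξ s t`. -/
theorem statement10 (p q p' q' k : ℕ) (hp : 1 ≤ p) (hq : 1 ≤ q) (hp' : 1 ≤ p')
    (hq' : 1 ≤ q') (hk : 1 ≤ k) (hdim : p * q * k = p' * q') (ξ : Fin k → C(𝕀, 𝕀)) :
    (∃ u ∈ unitary (𝔸 (p' * q')), ∀ f : ↥(Zpq p q),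
        u * diag (p * q) k (p' * q') hdim ξ ↑f * star u ∈ Zpq p' q') ↔
    ((q' ∣ q * mult k ξ 0 0) ∧ (q' ∣ p * mult k ξ 0 1) ∧
      (p' ∣ q * mult k ξ 1 0) ∧ (p' ∣ p * mult k ξ 1 1) ∧
      ∀ t : 𝕀, t ≠ 0 → t ≠ 1 → q' ∣ mult k ξ 0 t ∧ p' ∣ mult k ξ 1 t) :=
  statement10_general p q p' q' k hp hq hp' hq' hdim ξ
end
end

section
/- Let p, q ≥ 1, let τ be a faithful probability Radon measure on [0,1], and let σ be a faithful diffuse probability Radon measure on [0,1]. Then there exists an injective unital *-homomorphism φ : Z_{p,q} → Z_{p,q} such that ∫ tr(φ(f)(t)) dσ(t) = ∫ tr(f(t)) dτ(t) for all f ∈ Z_{p,q}. -/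
open MeasureTheory
open scoped ENNReal

noncomputable section

open scoped Matrix.Norms.L2Operator ComplexOrder

open scoped Kronecker

/-!
Write `F_μ t = μ [0, t]`. As `σ` is diffuse, `F_σ` is continuous and therefore takes every value
in `[0, 1]`; as `τ` is faithful, `F_τ` is strictly increasing, and it is right-continuous, so
`G_τ c = inf {t | c ≤ F_τ t}` satisfies `G_τ c ≤ t ↔ c ≤ F_τ t`. The monotone transport
`ξ = G_τ ∘ F_σ` is then a monotone surjection of `[0, 1]` (hence continuous) fixing `0` and `1`,
with `ξ_* σ = τ` since `σ {s | F_σ s ≤ F_τ t} = F_τ t`. Precomposition with `ξ` preserves the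
boundary conditions of `Z_{p,q}`, is injective because `ξ` is onto, and carries the trace of `τ`
to that of `σ` by change of variables.
-/

open Set Filter Topology

section CDF

theorem monotone_measure_Iic {α : Type*} [Preorder α] [MeasurableSpace α] (μ : Measure α) :
    Monotone fun t => μ (Iic t) :=
  fun _ _ h => measure_mono (Iic_subset_Iic.2 h)

variable {α : Type*} [LinearOrder α] [TopologicalSpace α] [OrderTopology α]
  [MeasurableSpace α] [BorelSpace α] (μ : Measure α) [IsFiniteMeasure μ]

theorem strictMono_measure_Iic [DenselyOrdered α] [μ.IsOpenPosMeasure] :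
    StrictMono fun t => μ (Iic t) := by
  intro a b hab
  have hpos : μ (Ioo a b) ≠ 0 := (isOpen_Ioo.measure_pos μ (nonempty_Ioo.2 hab)).ne'
  calc μ (Iic a) < μ (Iic a) + μ (Ioo a b) := ENNReal.lt_add_right (measure_ne_top μ _) hpos
    _ = μ (Iic a ∪ Ioo a b) :=
      (measure_union (Iic_disjoint_Ioi le_rfl |>.mono_right Ioo_subset_Ioi_self)
        measurableSet_Ioo).symm
    _ ≤ μ (Iic b) :=
      measure_mono (union_subset (Iic_subset_Iic.2 hab.le)
        (Ioo_subset_Ioc_self.trans Ioc_subset_Iic_self))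

variable [FirstCountableTopology α]

theorem continuousWithinAt_measure_Iic (a : α) :
    ContinuousWithinAt (fun t => μ (Iic t)) (Ici a) a := by
  refine tendsto_measure_of_tendsto_indicator_of_isFiniteMeasure _ μ
    (fun _ => measurableSet_Iic) fun x => ?_
  rcases le_or_gt x a with hxa | hax
  · filter_upwards [self_mem_nhdsWithin] with t (ht : a ≤ t)
    exact iff_of_true (hxa.trans ht) hxa
  · filter_upwards [nhdsWithin_le_nhds (Iio_mem_nhds hax)] with t (ht : t < x)
    exact iff_of_false ht.not_ge hax.not_ge

theorem continuous_measure_Iic [NullSingletonClass μ] : Continuous fun t => μ (Iic t) := by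
  refine continuous_iff_continuousAt.2 fun a => ?_
  refine tendsto_measure_of_ae_tendsto_indicator_of_isFiniteMeasure _ measurableSet_Iic
    (fun _ => measurableSet_Iic) ?_
  filter_upwards [μ.ae_ne a] with x hxa
  rcases hxa.lt_or_gt with hxa | hax
  · filter_upwards [Ioi_mem_nhds hxa] with t (ht : x < t)
    exact iff_of_true ht.le hxa.le
  · filter_upwards [Iio_mem_nhds hax] with t (ht : t < x)
    exact iff_of_false ht.not_ge hax.not_ge

theorem upperSemicontinuous_measure_Iic : UpperSemicontinuous fun t => μ (Iic t) := by
  intro a c hc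
  rw [← nhdsLE_sup_nhdsGE, eventually_sup]
  refine ⟨?_, (continuousWithinAt_measure_Iic μ a).eventually_lt_const hc⟩
  filter_upwards [self_mem_nhdsWithin] with t (ht : t ≤ a)
  exact (monotone_measure_Iic μ ht).trans_lt hc

end CDF

section Transport

variable {α : Type*} [CompleteLinearOrder α] [TopologicalSpace α]
  [OrderTopology α] [SecondCountableTopology α] [MeasurableSpace α] [BorelSpace α]
  (τ σ : Measure α) [IsProbabilityMeasure τ] [IsProbabilityMeasure σ]

def monotoneTransport (s : α) : α :=
  sInf {t | σ (Iic s) ≤ τ (Iic t)}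

theorem monotoneTransport_le_iff {s t : α} :
    monotoneTransport τ σ s ≤ t ↔ σ (Iic s) ≤ τ (Iic t) := by
  have hclosed : IsClosed {t | σ (Iic s) ≤ τ (Iic t)} :=
    (upperSemicontinuous_measure_Iic τ).isClosed_preimage _
  have hne : {t | σ (Iic s) ≤ τ (Iic t)}.Nonempty := ⟨⊤, by simp [prob_le_one]⟩
  exact ⟨fun h => (hclosed.sInf_mem hne).trans (monotone_measure_Iic τ h), fun h => sInf_le h⟩

theorem monotone_monotoneTransport : Monotone (monotoneTransport τ σ) := fun _ _ h =>
  (monotoneTransport_le_iff τ σ).2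
    ((monotone_measure_Iic σ h).trans ((monotoneTransport_le_iff τ σ).1 le_rfl))

theorem monotoneTransport_bot [NullSingletonClass σ] : monotoneTransport τ σ ⊥ = ⊥ :=
  le_bot_iff.1 ((monotoneTransport_le_iff τ σ).2 (by simp))

variable [DenselyOrdered α]

theorem monotoneTransport_top [τ.IsOpenPosMeasure] : monotoneTransport τ σ ⊤ = ⊤ := by
  by_contra h
  have hlt := strictMono_measure_Iic τ (lt_top_iff_ne_top.2 h)
  have hle := (monotoneTransport_le_iff τ σ).1 (le_refl (monotoneTransport τ σ ⊤))
  simp only [Iic_top, measure_univ] at hlt hle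
  exact hlt.not_ge hle

theorem exists_measure_Iic_eq [NullSingletonClass σ] {c : ℝ≥0∞} (hc : c ≤ 1) :
    ∃ s, σ (Iic s) = c :=
  intermediate_value_univ ⊥ ⊤ (continuous_measure_Iic σ) ⟨by simp, by simpa using hc⟩

theorem surjective_monotoneTransport [NullSingletonClass σ] [τ.IsOpenPosMeasure] :
    Function.Surjective (monotoneTransport τ σ) := by
  intro t
  obtain ⟨s, hs⟩ := exists_measure_Iic_eq σ (prob_le_one (μ := τ) (s := Iic t))
  refine ⟨s, le_antisymm ((monotoneTransport_le_iff τ σ).2 hs.le) ?_⟩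
  exact (strictMono_measure_Iic τ).le_iff_le.1 (hs ▸ (monotoneTransport_le_iff τ σ).1 le_rfl)

theorem continuous_monotoneTransport [NullSingletonClass σ] [τ.IsOpenPosMeasure] :
    Continuous (monotoneTransport τ σ) :=
  (monotone_monotoneTransport τ σ).continuous_of_denseRange
    (surjective_monotoneTransport τ σ).denseRange

theorem map_monotoneTransport [NullSingletonClass σ] [τ.IsOpenPosMeasure] :
    σ.map (monotoneTransport τ σ) = τ := by
  refine Measure.ext_of_Iic _ _ fun t => ?_
  rw [Measure.map_apply (continuous_monotoneTransport τ σ).measurable measurableSet_Iic]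
  set A := {s | σ (Iic s) ≤ τ (Iic t)}
  have hA : monotoneTransport τ σ ⁻¹' Iic t = A := ext fun _ => monotoneTransport_le_iff τ σ
  obtain ⟨s₁, hs₁⟩ := exists_measure_Iic_eq σ (prob_le_one (μ := τ) (s := Iic t))
  have hmem : sSup A ∈ A :=
    (isClosed_le (continuous_measure_Iic σ) continuous_const).sSup_mem ⟨s₁, hs₁.le⟩
  have hA_eq : A = Iic (sSup A) := Subset.antisymm (fun _ hs => le_sSup hs)
    (fun _ hs => (monotone_measure_Iic σ hs).trans hmem)
  rw [hA, hA_eq]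
  exact le_antisymm hmem (hs₁ ▸ monotone_measure_Iic σ (le_sSup hs₁.le))

end Transport

theorem comp_mem_Zpq {p q : ℕ} {f : 𝔸 (p * q)} (hf : f ∈ Zpq p q) {ξ : C(𝕀, 𝕀)}
    (h0 : ξ 0 = 0) (h1 : ξ 1 = 1) : f.comp ξ ∈ Zpq p q := by
  obtain ⟨hf0, hf1⟩ := hf
  refine ⟨?_, ?_⟩
  · change f (ξ 0) ∈ (lKron p q).range
    rw [h0]
    exact hf0
  · change f (ξ 1) ∈ (rKron p q).range
    rw [h1]
    exact hf1

def Zpq.compStarAlgHom (p q : ℕ) (ξ : C(𝕀, 𝕀)) (h0 : ξ 0 = 0) (h1 : ξ 1 = 1) :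
    Zpq p q →⋆ₐ[ℂ] Zpq p q :=
  ((ContinuousMap.compStarAlgHom' ℂ (Mat (p * q)) ξ).comp (Zpq p q).subtype).codRestrict _
    fun f => comp_mem_Zpq f.2 h0 h1

theorem Zpq.compStarAlgHom_apply (p q : ℕ) (ξ : C(𝕀, 𝕀)) (h0 : ξ 0 = 0) (h1 : ξ 1 = 1)
    (f : Zpq p q) :
    (Zpq.compStarAlgHom p q ξ h0 h1 f : 𝔸 (p * q)) = (f : 𝔸 (p * q)).comp ξ :=
  rfl

theorem Zpq.compStarAlgHom_injective {p q : ℕ} {ξ : C(𝕀, 𝕀)} (h0 : ξ 0 = 0)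
    (h1 : ξ 1 = 1) (hξ : Function.Surjective ξ) : Function.Injective (Zpq.compStarAlgHom p q ξ h0 h1) := by
  intro f g hfg
  refine Subtype.ext (ContinuousMap.ext fun s => ?_)
  obtain ⟨t, rfl⟩ := hξ s
  exact DFunLike.congr_fun (congrArg Subtype.val hfg) t

theorem trInt_comp (n : ℕ) (μ : Measure 𝕀) (ξ : C(𝕀, 𝕀)) (f : 𝔸 n) :
    trInt n μ (f.comp ξ) = trInt n (μ.map ξ) f :=
  (integral_map ξ.continuous.aemeasurable
    (f.continuous.matrix_trace.div_const _).aestronglyMeasurable).symm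

theorem Faithful.isOpenPosMeasure {μ : Measure 𝕀} (hμ : Faithful μ) : μ.IsOpenPosMeasure :=
  ⟨fun U hU hne => (hμ U hU hne).ne'⟩

theorem statement12_general (p q : ℕ) (τ σ : Measure 𝕀)
    [IsProbabilityMeasure τ] [IsProbabilityMeasure σ]
    (hτf : Faithful τ) (hσd : Diffuse σ) :
    ∃ φ : ↥(Zpq p q) →⋆ₐ[ℂ] ↥(Zpq p q), Function.Injective φ ∧
      ∀ f : ↥(Zpq p q), trInt (p * q) σ ↑(φ f) = trInt (p * q) τ ↑f := by
  have := hτf.isOpenPosMeasure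
  have : NullSingletonClass σ := ⟨hσd⟩
  let ξ : C(𝕀, 𝕀) := ⟨monotoneTransport τ σ, continuous_monotoneTransport τ σ⟩
  have h0 : ξ 0 = 0 := monotoneTransport_bot τ σ
  have h1 : ξ 1 = 1 := monotoneTransport_top τ σ
  refine ⟨Zpq.compStarAlgHom p q ξ h0 h1,
    Zpq.compStarAlgHom_injective h0 h1 (surjective_monotoneTransport τ σ), fun f => ?_⟩
  rw [Zpq.compStarAlgHom_apply, trInt_comp, ContinuousMap.coe_mk, map_monotoneTransport]

/-- For a faithful measure τ and a faithful diffuse measure σ on `[0,1]`,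
there is a morphism (injective unital *-homomorphism, trace-preserving) from
`⟨Z_{p,q}, τ⟩` into `⟨Z_{p,q}, σ⟩`. -/
theorem statement12 (p q : ℕ) (hp : 1 ≤ p) (hq : 1 ≤ q) (τ σ : Measure 𝕀)
    [IsProbabilityMeasure τ] [IsProbabilityMeasure σ] [τ.Regular] [σ.Regular]
    (hτf : Faithful τ) (hσf : Faithful σ) (hσd : Diffuse σ) :
    ∃ φ : ↥(Zpq p q) →⋆ₐ[ℂ] ↥(Zpq p q), Function.Injective φ ∧
      ∀ f : ↥(Zpq p q), trInt (p * q) σ ↑(φ f) = trInt (p * q) τ ↑f :=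
  statement12_general p q τ σ hτf hσd
end
end
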